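/- As a special case (ε₁ = δ₁ = 0) of the previous: Grushevsky's cubic relations imply Frobenius' quadratic identity Q[0,0]² = Σ_{k=0}^{g} Q[s_k, e_{k+1}]². -/

import Mathlib

variable {g : ℕ} {A : Type*} [CommRing A]

/-- The sign `(-1)^⟨u,v⟩ ∈ A` attached to `u, v ∈ (ℤ/2)^g`. -/
def sgn (A : Type*) [CommRing A] {g : ℕ} (u v : Fin g → ZMod 2) : A :=
  (-1 : A) ^ (∑ i, (u i).val * (v i).val)

/-- The quadratic expression `Q[ε,δ] = Σ_{σ∈(ℤ/2)^g} (-1)^{⟨σ,δ⟩} Θ[σ]Θ[σ+ε]` attached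
to a function `Θ : (ℤ/2)^g → A`. -/
def Qabs (Θ : (Fin g → ZMod 2) → A) (ε δ : Fin g → ZMod 2) : A :=
  ∑ σ : Fin g → ZMod 2, sgn A σ δ * Θ σ * Θ (σ + ε)

/-- `E k` is the basis vector `e_{k+1}` for `0 ≤ k < g`, and `E g = e_{g+1} = 0`. -/
def Evec (g : ℕ) (k : ℕ) : Fin g → ZMod 2 :=
  if h : k < g then Pi.single ⟨k, h⟩ 1 else 0

/-- `S k = e_1 + ⋯ + e_k` (so `S 0 = 0`). -/
def Svec (g : ℕ) (k : ℕ) : Fin g → ZMod 2 :=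
  ∑ j ∈ Finset.range k, Evec g j

theorem sgn_zero_right {g : ℕ} (u : Fin g → ZMod 2) : sgn A u 0 = 1 := by
  simp [sgn]

theorem Qabs_zero_zero (Θ : (Fin g → ZMod 2) → A) : Qabs Θ 0 0 = ∑ σ, Θ σ * Θ σ := by
  simp only [Qabs, sgn_zero_right, one_mul, add_zero]

theorem sum_expansion_mul_eq_sum_mul_Qabs {ι : Type*} (Θ : (Fin g → ZMod 2) → A)
    (s : Finset ι) (ε δ : ι → Fin g → ZMod 2) (c : ι → A) :
    ∑ σ, (∑ k ∈ s, sgn A σ (δ k) * (c k * Θ (σ + ε k))) * Θ σ =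
      ∑ k ∈ s, c k * Qabs Θ (ε k) (δ k) := by
  simp only [Qabs, Finset.sum_mul, Finset.mul_sum]
  rw [Finset.sum_comm]
  exact Finset.sum_congr rfl fun k _ => Finset.sum_congr rfl fun σ _ => by ring

theorem Qabs_zero_zero_mul_self_of_expansion {ι : Type*} (Θ : (Fin g → ZMod 2) → A)
    (s : Finset ι) (ε δ : ι → Fin g → ZMod 2) (c : ι → A)
    (h : ∀ σ, Qabs Θ 0 0 * Θ σ = ∑ k ∈ s, sgn A σ (δ k) * (c k * Θ (σ + ε k))) :
    Qabs Θ 0 0 * Qabs Θ 0 0 = ∑ k ∈ s, c k * Qabs Θ (ε k) (δ k) := by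
  calc Qabs Θ 0 0 * Qabs Θ 0 0 = Qabs Θ 0 0 * ∑ σ, Θ σ * Θ σ := by rw [← Qabs_zero_zero]
    _ = ∑ σ, Qabs Θ 0 0 * Θ σ * Θ σ := by simp only [Finset.mul_sum, mul_assoc]
    _ = ∑ k ∈ s, c k * Qabs Θ (ε k) (δ k) := by
        simp only [h, sum_expansion_mul_eq_sum_mul_Qabs]

/-- Grushevsky's cubic relations imply Frobenius' quadratic identity
`Q[0,0]² = Σ_{k=0}^{g} Q[s_k,e_{k+1}]²` (the case `ε₁ = δ₁ = 0`). -/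
theorem cubics_imply_frobenius (g : ℕ) (A : Type*) [CommRing A]
    (Θ : (Fin g → ZMod 2) → A)
    (hcubic : ∀ σ : Fin g → ZMod 2,
      Qabs Θ 0 0 * Θ σ =
        ∑ k ∈ Finset.range (g + 1),
          sgn A σ (Evec g k) * (Qabs Θ (Svec g k) (Evec g k) * Θ (σ + Svec g k))) :
    Qabs Θ 0 0 ^ 2 =
      ∑ k ∈ Finset.range (g + 1), Qabs Θ (Svec g k) (Evec g k) ^ 2 := by
  simpa only [sq] using Qabs_zero_zero_mul_self_of_expansion Θ (Finset.range (g + 1))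
    (Svec g) (Evec g) (fun k => Qabs Θ (Svec g k) (Evec g k)) hcubic
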